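/- Let f : ℝⁿ → ℝⁿ and σ₁, …, σ_m : ℝⁿ → ℝⁿ be twice continuously differentiable functions with f(0) = 0 and σ_k(0) = 0 for each k. Let A = Df(0) and S_k = Dσ_k(0) be the Jacobian matrices at the origin, and let P, Q be symmetric positive definite real n×n matrices satisfying the stochastic Lyapunov equation P A + Aᵀ P + Σ_{k=1}^m S_kᵀ P S_k = −Q. Define h : ℝⁿ → ℝ by h(x) = 2 xᵀ P f(x) + Σ_{k=1}^m σ_k(x)ᵀ P σ_k(x), and set M(x) = D²h(x) + 2Q. Let ε > 0 be such that r := λ_min(Q) − ε > 0, and suppose there exists c > 0 such that every x ∈ ℝⁿ with xᵀ P x ≤ c satisfies ‖M(x)‖_F ≤ 2r. Then h(x) ≤ −ε·|x|² for every x with xᵀ P x ≤ c; in particular, h(x) < 0 for every x ≠ 0 with xᵀ P x ≤ c. -/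

import Mathlib

/-!
Since `f(0) = 0` and `σ_k(0) = 0`, the function `h` vanishes to second order at the origin, so
Taylor's formula along the segment `[0, x]` gives `h x = ½ xᵀ D²h(t x) x` for some `t ∈ (0, 1)`.
The sublevel set `{xᵀ P x ≤ c}` is star-shaped about `0`, so `t x` lies in it, and there
`xᵀ D²h(t x) x = xᵀ M(t x) x - 2 xᵀ Q x ≤ 2 r |x|² - 2 λ_min(Q) |x|² = -2 ε |x|²`,
the first term being bounded through `|v ⬝ M v| ≤ ‖M‖_F |v|²`.
-/

open Matrix

noncomputable def frobNorm {n : ℕ} (M : Matrix (Fin n) (Fin n) ℝ) : ℝ :=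
  Real.sqrt (∑ i, ∑ j, (M i j) ^ 2)

noncomputable def hessianMatrix {n : ℕ} (h : EuclideanSpace ℝ (Fin n) → ℝ)
    (x : EuclideanSpace ℝ (Fin n)) : Matrix (Fin n) (Fin n) ℝ :=
  fun i j => fderiv ℝ (fderiv ℝ h) x (EuclideanSpace.single i 1) (EuclideanSpace.single j 1)

open Set
open scoped RealInnerProductSpace MatrixOrder

section QuadraticForms

variable {ι : Type*} [Fintype ι]

lemma iInf_eigenvalues_mul_dotProduct_self_le [DecidableEq ι] {Q : Matrix ι ι ℝ}
    (hQ : Q.IsHermitian) (x : ι → ℝ) :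
    (⨅ i, hQ.eigenvalues i) * (x ⬝ᵥ x) ≤ x ⬝ᵥ Q *ᵥ x := by
  have hle : algebraMap ℝ _ (⨅ i, hQ.eigenvalues i) ≤ Q := by
    rw [algebraMap_le_iff_le_spectrum (R := ℝ) hQ.isSelfAdjoint,
      hQ.spectrum_real_eq_range_eigenvalues]
    rintro _ ⟨i, rfl⟩
    exact ciInf_le (Set.finite_range _).bddBelow i
  simpa [sub_mulVec, Algebra.algebraMap_eq_smul_one, dotProduct_sub, smul_mulVec,
    dotProduct_smul] using (Matrix.le_iff.mp hle).dotProduct_mulVec_nonneg x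

lemma Matrix.PosSemidef.dotProduct_mulVec_smul_le {P : Matrix ι ι ℝ} (hP : P.PosSemidef)
    (x : ι → ℝ) {t : ℝ} (ht₀ : 0 ≤ t) (ht₁ : t ≤ 1) :
    (t • x) ⬝ᵥ P *ᵥ (t • x) ≤ x ⬝ᵥ P *ᵥ x := by
  have hx : 0 ≤ x ⬝ᵥ P *ᵥ x := by simpa using hP.dotProduct_mulVec_nonneg x
  rw [mulVec_smul, smul_dotProduct, dotProduct_smul, smul_eq_mul, smul_eq_mul, ← mul_assoc]
  exact mul_le_of_le_one_left hx (by nlinarith)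

lemma EuclideanSpace.dotProduct_self_eq_norm_sq (x : EuclideanSpace ℝ ι) :
    (x : ι → ℝ) ⬝ᵥ x = ‖x‖ ^ 2 := by
  rw [← real_inner_self_eq_norm_sq, EuclideanSpace.inner_eq_star_dotProduct]
  simp

end QuadraticForms

section FrobeniusNorm

variable {n : ℕ}

lemma norm_toLp_mulVec_le_frobNorm_mul_norm (M : Matrix (Fin n) (Fin n) ℝ)
    (x : EuclideanSpace ℝ (Fin n)) : ‖WithLp.toLp 2 (M *ᵥ x)‖ ≤ frobNorm M * ‖x‖ := by
  rw [EuclideanSpace.norm_eq, EuclideanSpace.norm_eq, frobNorm,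
    ← Real.sqrt_mul (by positivity), Finset.sum_mul]
  refine Real.sqrt_le_sqrt (Finset.sum_le_sum fun i _ => ?_)
  simpa [mulVec, dotProduct] using Finset.sum_mul_sq_le_sq_mul_sq Finset.univ (M i) x

lemma dotProduct_mulVec_le_frobNorm_mul_norm_sq (M : Matrix (Fin n) (Fin n) ℝ)
    (x : EuclideanSpace ℝ (Fin n)) : (x : Fin n → ℝ) ⬝ᵥ M *ᵥ x ≤ frobNorm M * ‖x‖ ^ 2 := by
  calc (x : Fin n → ℝ) ⬝ᵥ M *ᵥ x = ⟪x, WithLp.toLp 2 (M *ᵥ x)⟫ := by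
        simp [EuclideanSpace.inner_eq_star_dotProduct, dotProduct_comm]
    _ ≤ ‖x‖ * ‖WithLp.toLp 2 (M *ᵥ x)‖ := real_inner_le_norm _ _
    _ ≤ ‖x‖ * (frobNorm M * ‖x‖) := by gcongr; exact norm_toLp_mulVec_le_frobNorm_mul_norm M x
    _ = frobNorm M * ‖x‖ ^ 2 := by ring

lemma dotProduct_mulVec_le_neg_mul_norm_sq {Q H : Matrix (Fin n) (Fin n) ℝ} (hQ : Q.IsHermitian)
    {ε : ℝ} (hHQ : frobNorm (H + (2 : ℝ) • Q) ≤ 2 * ((⨅ i, hQ.eigenvalues i) - ε))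
    (x : EuclideanSpace ℝ (Fin n)) :
    (x : Fin n → ℝ) ⬝ᵥ H *ᵥ x ≤ -2 * ε * ‖x‖ ^ 2 := by
  have hQx := iInf_eigenvalues_mul_dotProduct_self_le hQ x
  rw [EuclideanSpace.dotProduct_self_eq_norm_sq] at hQx
  have hsplit : (x : Fin n → ℝ) ⬝ᵥ H *ᵥ x
      = (x : Fin n → ℝ) ⬝ᵥ (H + (2 : ℝ) • Q) *ᵥ x - 2 * ((x : Fin n → ℝ) ⬝ᵥ Q *ᵥ x) := by
    simp [add_mulVec, smul_mulVec, dotProduct_add]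
  have hbound := (dotProduct_mulVec_le_frobNorm_mul_norm_sq (H + (2 : ℝ) • Q) x).trans
    (mul_le_mul_of_nonneg_right hHQ (sq_nonneg ‖x‖))
  linarith

end FrobeniusNorm

section SecondOrderTaylor

variable {E F : Type*} [NormedAddCommGroup E] [NormedSpace ℝ E]
  [NormedAddCommGroup F] [NormedSpace ℝ F]

lemma exists_mem_Ioo_eq_iteratedDeriv_two_div_two {g : ℝ → ℝ} (hg : ContDiff ℝ 2 g)
    (hg0 : g 0 = 0) (hg'0 : deriv g 0 = 0) :
    ∃ t ∈ Ioo (0 : ℝ) 1, g 1 = iteratedDeriv 2 g t / 2 := by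
  obtain ⟨t, ht, htaylor⟩ :=
    taylor_mean_remainder_lagrange_iteratedDeriv (n := 1) zero_ne_one hg.contDiffOn
  have hderiv : derivWithin g (Icc 0 1) 0 = deriv g 0 :=
    (hg.differentiable two_ne_zero 0).derivWithin (uniqueDiffOn_Icc zero_lt_one 0 (by simp))
  refine ⟨t, by simpa using ht, ?_⟩
  simpa [taylor_within_apply, hg0, hderiv, hg'0] using htaylor

lemma hasDerivAt_comp_smul_const {h : E → F} {x : E} {s : ℝ}
    (hh : DifferentiableAt ℝ h (s • x)) :
    HasDerivAt (fun s : ℝ => h (s • x)) (fderiv ℝ h (s • x) x) s := by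
  have hline : HasDerivAt (fun s : ℝ => s • x) x s := by
    simpa using (hasDerivAt_id s).smul_const x
  exact hh.hasFDerivAt.comp_hasDerivAt s hline

lemma exists_mem_Ioo_eq_fderiv_fderiv_div_two {h : E → ℝ} (hh : ContDiff ℝ 2 h)
    (h0 : h 0 = 0) (hd0 : fderiv ℝ h 0 = 0) (x : E) :
    ∃ t ∈ Ioo (0 : ℝ) 1, h x = fderiv ℝ (fderiv ℝ h) (t • x) x x / 2 := by
  have hD : Differentiable ℝ (fderiv ℝ h) :=
    (hh.fderiv_right (m := 1) (by norm_num)).differentiable one_ne_zero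
  have hg : deriv (fun s : ℝ => h (s • x)) = fun s => fderiv ℝ h (s • x) x :=
    funext fun s => (hasDerivAt_comp_smul_const (hh.differentiable two_ne_zero _)).deriv
  obtain ⟨t, ht, heq⟩ := exists_mem_Ioo_eq_iteratedDeriv_two_div_two (g := fun s : ℝ => h (s • x))
    (hh.comp (contDiff_id.smul contDiff_const)) (by simpa using h0) (by simp [hg, hd0])
  have hg' : HasDerivAt (fun s : ℝ => fderiv ℝ h (s • x) x)
      (fderiv ℝ (fderiv ℝ h) (t • x) x x) t := by
    simpa using (hasDerivAt_comp_smul_const (hD _)).clm_apply (hasDerivAt_const t x)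
  refine ⟨t, ht, ?_⟩
  simp only [iteratedDeriv_succ, iteratedDeriv_zero, hg] at heq
  simpa [hg'.deriv] using heq

end SecondOrderTaylor

section Generator

variable {ι E : Type*} [Fintype ι] [NormedAddCommGroup E] [NormedSpace ℝ E]

lemma ContinuousLinearMap.apply_apply_eq_dotProduct_mulVec [DecidableEq ι]
    (B : EuclideanSpace ℝ ι →L[ℝ] EuclideanSpace ℝ ι →L[ℝ] ℝ) (x y : EuclideanSpace ℝ ι) :
    B x y = (x : ι → ℝ) ⬝ᵥ (Matrix.of fun i j =>
      B (EuclideanSpace.single i 1) (EuclideanSpace.single j 1)) *ᵥ y := by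
  conv_lhs => rw [← (EuclideanSpace.basisFun ι ℝ).sum_repr x,
    ← (EuclideanSpace.basisFun ι ℝ).sum_repr y]
  simp [map_sum, dotProduct, mulVec, Finset.mul_sum]
  rw [Finset.sum_comm]
  exact Finset.sum_congr rfl fun i _ => Finset.sum_congr rfl fun j _ => by ring

lemma fderiv_fderiv_apply_eq_dotProduct_hessianMatrix {n : ℕ}
    (h : EuclideanSpace ℝ (Fin n) → ℝ) (x y : EuclideanSpace ℝ (Fin n)) :
    fderiv ℝ (fderiv ℝ h) y x x = (x : Fin n → ℝ) ⬝ᵥ hessianMatrix h y *ᵥ x :=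
  (fderiv ℝ (fderiv ℝ h) y).apply_apply_eq_dotProduct_mulVec x x

lemma contDiff_dotProduct_mulVec [DecidableEq ι] {k : WithTop ℕ∞} (P : Matrix ι ι ℝ)
    {g₁ g₂ : E → EuclideanSpace ℝ ι} (h₁ : ContDiff ℝ k g₁) (h₂ : ContDiff ℝ k g₂) :
    ContDiff ℝ k fun x => (g₁ x : ι → ℝ) ⬝ᵥ P *ᵥ (g₂ x : ι → ℝ) := by
  simp_rw [← inner_toEuclideanCLM]
  exact h₁.inner ℝ ((toEuclideanCLM (𝕜 := ℝ) P).contDiff.comp h₂)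

lemma hasFDerivAt_dotProduct_mulVec_of_eq_zero [DecidableEq ι] (P : Matrix ι ι ℝ)
    {g₁ g₂ : E → EuclideanSpace ℝ ι} {a : E} (h₁ : DifferentiableAt ℝ g₁ a)
    (h₂ : DifferentiableAt ℝ g₂ a) (h₁a : g₁ a = 0) (h₂a : g₂ a = 0) :
    HasFDerivAt (fun x => (g₁ x : ι → ℝ) ⬝ᵥ P *ᵥ (g₂ x : ι → ℝ)) (0 : E →L[ℝ] ℝ) a := by
  simp_rw [← inner_toEuclideanCLM]
  have := h₁.hasFDerivAt.inner ℝ ((toEuclideanCLM (𝕜 := ℝ) P).hasFDerivAt.comp a h₂.hasFDerivAt)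
  have h0 : fderivInnerCLM ℝ ((0 : EuclideanSpace ℝ ι), (0 : EuclideanSpace ℝ ι)) = 0 :=
    ContinuousLinearMap.ext fun p => by simp [fderivInnerCLM_apply]
  simpa [h₁a, h₂a, h0] using this

/-- The generator `L V_P` of `dX = f(X) dt + σ(X) dB` applied to `V_P(x) = xᵀ P x`. -/
noncomputable def lyapunovGenerator {m : ℕ} (P : Matrix ι ι ℝ)
    (f : EuclideanSpace ℝ ι → EuclideanSpace ℝ ι)
    (σ : Fin m → EuclideanSpace ℝ ι → EuclideanSpace ℝ ι) (x : EuclideanSpace ℝ ι) : ℝ :=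
  2 * ((x : ι → ℝ) ⬝ᵥ P *ᵥ (f x : ι → ℝ)) + ∑ k, (σ k x : ι → ℝ) ⬝ᵥ P *ᵥ (σ k x : ι → ℝ)

variable {m : ℕ} (P : Matrix ι ι ℝ) {f : EuclideanSpace ℝ ι → EuclideanSpace ℝ ι}
  {σ : Fin m → EuclideanSpace ℝ ι → EuclideanSpace ℝ ι}

lemma contDiff_lyapunovGenerator [DecidableEq ι] {k : WithTop ℕ∞} (hf : ContDiff ℝ k f)
    (hσ : ∀ i, ContDiff ℝ k (σ i)) : ContDiff ℝ k (lyapunovGenerator P f σ) :=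
  (contDiff_const.mul (contDiff_dotProduct_mulVec P contDiff_id hf)).add
    (ContDiff.sum fun i _ => contDiff_dotProduct_mulVec P (hσ i) (hσ i))

lemma lyapunovGenerator_zero (hf0 : f 0 = 0) (hσ0 : ∀ i, σ i 0 = 0) :
    lyapunovGenerator P f σ 0 = 0 := by
  simp [lyapunovGenerator, hf0, hσ0]

lemma hasFDerivAt_lyapunovGenerator_zero [DecidableEq ι] (hf : DifferentiableAt ℝ f 0)
    (hσ : ∀ i, DifferentiableAt ℝ (σ i) 0) (hf0 : f 0 = 0) (hσ0 : ∀ i, σ i 0 = 0) :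
    HasFDerivAt (lyapunovGenerator P f σ) (0 : EuclideanSpace ℝ ι →L[ℝ] ℝ) 0 := by
  have hdrift := hasFDerivAt_dotProduct_mulVec_of_eq_zero P differentiableAt_id hf rfl hf0
  have hdiffusion := HasFDerivAt.fun_sum fun i (_ : i ∈ Finset.univ) =>
    hasFDerivAt_dotProduct_mulVec_of_eq_zero P (hσ i) (hσ i) (hσ0 i) (hσ0 i)
  have := (hdrift.const_mul (2 : ℝ)).add hdiffusion
  rw [smul_zero, Finset.sum_const_zero, add_zero] at this
  exact this

end Generator

theorem le_neg_mul_norm_sq_of_frobNorm_hessianMatrix_add_le {n : ℕ}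
    {h : EuclideanSpace ℝ (Fin n) → ℝ} (hh : ContDiff ℝ 2 h) (h0 : h 0 = 0)
    (hd0 : fderiv ℝ h 0 = 0) {P Q : Matrix (Fin n) (Fin n) ℝ} (hP : P.PosSemidef)
    (hQ : Q.IsHermitian) {ε c : ℝ}
    (hcond : ∀ y : EuclideanSpace ℝ (Fin n), (y : Fin n → ℝ) ⬝ᵥ P *ᵥ y ≤ c →
      frobNorm (hessianMatrix h y + (2 : ℝ) • Q) ≤ 2 * ((⨅ i, hQ.eigenvalues i) - ε))
    {x : EuclideanSpace ℝ (Fin n)} (hx : (x : Fin n → ℝ) ⬝ᵥ P *ᵥ x ≤ c) :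
    h x ≤ -ε * ‖x‖ ^ 2 := by
  obtain ⟨t, ht, htaylor⟩ := exists_mem_Ioo_eq_fderiv_fderiv_div_two hh h0 hd0 x
  have htx : ((t • x : EuclideanSpace ℝ (Fin n)) : Fin n → ℝ) ⬝ᵥ P *ᵥ (t • x) ≤ c :=
    (hP.dotProduct_mulVec_smul_le x ht.1.le ht.2.le).trans hx
  have hhess := dotProduct_mulVec_le_neg_mul_norm_sq hQ (hcond _ htx) x
  rw [htaylor, fderiv_fderiv_apply_eq_dotProduct_hessianMatrix]
  linarith

theorem stmt0_general {n m : ℕ}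
    (f : EuclideanSpace ℝ (Fin n) → EuclideanSpace ℝ (Fin n))
    (σ : Fin m → EuclideanSpace ℝ (Fin n) → EuclideanSpace ℝ (Fin n))
    (hf : ContDiff ℝ 2 f) (hσ : ∀ k, ContDiff ℝ 2 (σ k))
    (hf0 : f 0 = 0) (hσ0 : ∀ k, σ k 0 = 0)
    (P Q : Matrix (Fin n) (Fin n) ℝ) (hP : P.PosDef) (hQ : Q.PosDef)
    (h : EuclideanSpace ℝ (Fin n) → ℝ)
    (hh : ∀ x, h x = 2 * (x ⬝ᵥ P.mulVec (f x)) + ∑ k, (σ k x) ⬝ᵥ P.mulVec (σ k x))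
    (M : EuclideanSpace ℝ (Fin n) → Matrix (Fin n) (Fin n) ℝ)
    (hM : ∀ x, M x = hessianMatrix h x + (2 : ℝ) • Q)
    (ε : ℝ) (hε : 0 < ε)
    (r : ℝ) (hr : r = (⨅ i, hQ.1.eigenvalues i) - ε)
    (c : ℝ)
    (hcond : ∀ x : EuclideanSpace ℝ (Fin n), x ⬝ᵥ P.mulVec x ≤ c → frobNorm (M x) ≤ 2 * r) :
    (∀ x : EuclideanSpace ℝ (Fin n), x ⬝ᵥ P.mulVec x ≤ c → h x ≤ -ε * ‖x‖ ^ 2) ∧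
    (∀ x : EuclideanSpace ℝ (Fin n), x ≠ 0 → x ⬝ᵥ P.mulVec x ≤ c → h x < 0) := by
  obtain rfl : h = lyapunovGenerator P f σ := funext hh
  have hd0 : fderiv ℝ (lyapunovGenerator P f σ) 0 = 0 :=
    (hasFDerivAt_lyapunovGenerator_zero P (hf.differentiable two_ne_zero 0)
      (fun k => (hσ k).differentiable two_ne_zero 0) hf0 hσ0).fderiv
  have hbound : ∀ x : EuclideanSpace ℝ (Fin n), x ⬝ᵥ P.mulVec x ≤ c →
      lyapunovGenerator P f σ x ≤ -ε * ‖x‖ ^ 2 := fun x hx =>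
    le_neg_mul_norm_sq_of_frobNorm_hessianMatrix_add_le (contDiff_lyapunovGenerator P hf hσ)
      (lyapunovGenerator_zero P hf0 hσ0) hd0 hP.posSemidef hQ.1
      (fun y hy => hM y ▸ hr ▸ hcond y hy) hx
  exact ⟨hbound, fun x hx0 hx => (hbound x hx).trans_lt
    (mul_neg_of_neg_of_pos (neg_neg_of_pos hε) (pow_pos (norm_pos_iff.mpr hx0) 2))⟩

theorem stmt0 {n m : ℕ}
    (f : EuclideanSpace ℝ (Fin n) → EuclideanSpace ℝ (Fin n))
    (σ : Fin m → EuclideanSpace ℝ (Fin n) → EuclideanSpace ℝ (Fin n))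
    (hf : ContDiff ℝ 2 f) (hσ : ∀ k, ContDiff ℝ 2 (σ k))
    (hf0 : f 0 = 0) (hσ0 : ∀ k, σ k 0 = 0)
    (A : Matrix (Fin n) (Fin n) ℝ) (S : Fin m → Matrix (Fin n) (Fin n) ℝ)
    (hA : ∀ v, fderiv ℝ f 0 v = A.mulVec v)
    (hS : ∀ k v, fderiv ℝ (σ k) 0 v = (S k).mulVec v)
    (P Q : Matrix (Fin n) (Fin n) ℝ) (hP : P.PosDef) (hQ : Q.PosDef)
    (hLyap : P * A + Aᵀ * P + ∑ k, (S k)ᵀ * P * S k = -Q)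
    (h : EuclideanSpace ℝ (Fin n) → ℝ)
    (hh : ∀ x, h x = 2 * (x ⬝ᵥ P.mulVec (f x)) + ∑ k, (σ k x) ⬝ᵥ P.mulVec (σ k x))
    (M : EuclideanSpace ℝ (Fin n) → Matrix (Fin n) (Fin n) ℝ)
    (hM : ∀ x, M x = hessianMatrix h x + (2 : ℝ) • Q)
    (ε : ℝ) (hε : 0 < ε)
    (r : ℝ) (hr : r = (⨅ i, hQ.1.eigenvalues i) - ε) (hrpos : 0 < r)
    (c : ℝ) (hc : 0 < c)
    (hcond : ∀ x : EuclideanSpace ℝ (Fin n), x ⬝ᵥ P.mulVec x ≤ c → frobNorm (M x) ≤ 2 * r) :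
    (∀ x : EuclideanSpace ℝ (Fin n), x ⬝ᵥ P.mulVec x ≤ c → h x ≤ -ε * ‖x‖ ^ 2) ∧
    (∀ x : EuclideanSpace ℝ (Fin n), x ≠ 0 → x ⬝ᵥ P.mulVec x ≤ c → h x < 0) :=
  stmt0_general f σ hf hσ hf0 hσ0 P Q hP hQ h hh M hM ε hε r hr c hcond
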